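/- arXiv:2311.07886 — 11 statements merged into one kernel-verified Lean document; each statement's English description precedes it below -/
import Mathlib

section
/- For every natural number n there is a strategy for the n-player, two-colour hat game that guarantees at most one wrong guess. Precisely: there exists a function guess : (Fin n → Bool) → Fin n → Bool such that (a) for every i : Fin n and all hat assignments x, y : Fin n → Bool, if x j = y j for all j > i and guess x j = guess y j for all j < i, then guess x i = guess y i; and (b) for every hat assignment x : Fin n → Bool, the set {i : Fin n | guess x i ≠ x i} has at most one element. -/
/-!
Player `0` announces the parity of the hats of players `1, …, n - 1`; every later player `i`
then knows all of those hats except their own (those behind them were announced correctly,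
those in front are visible), so the announced parity determines hat `i`. Only player `0` can
be wrong.
-/

open Finset

def hatParity {ι : Type*} (s : Finset ι) (x : ι → Bool) : ZMod 2 :=
  ∑ j ∈ s, ((x j).toNat : ZMod 2)

lemma eq_of_hatParity_eq {ι : Type*} [DecidableEq ι] {s : Finset ι} {x y : ι → Bool} {i : ι}
    (hi : i ∈ s) (hxy : ∀ j ∈ s, j ≠ i → x j = y j) (h : hatParity s x = hatParity s y) :
    x i = y i := by
  have hrest :
      ∑ j ∈ s.erase i, ((x j).toNat : ZMod 2) = ∑ j ∈ s.erase i, ((y j).toNat : ZMod 2) :=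
    sum_congr rfl fun j hj => by rw [hxy j (mem_of_mem_erase hj) (ne_of_mem_erase hj)]
  rw [hatParity, hatParity, ← add_sum_erase s _ hi, ← add_sum_erase s _ hi, hrest] at h
  have hcast : Function.Injective fun b : Bool => (b.toNat : ZMod 2) := by decide
  exact hcast (add_right_cancel h)

def parityStrategy (n : ℕ) (x : Fin n → Bool) (i : Fin n) : Bool :=
  if (i : ℕ) = 0 then decide (hatParity {j : Fin n | (j : ℕ) ≠ 0} x = 1) else x i

lemma parityStrategy_of_ne_zero {n : ℕ} (x : Fin n → Bool) {i : Fin n} (hi : (i : ℕ) ≠ 0) :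
    parityStrategy n x i = x i :=
  if_neg hi

lemma parityStrategy_eq_of_visible_eq {n : ℕ} (i : Fin n) (x y : Fin n → Bool)
    (hfront : ∀ j, i < j → x j = y j)
    (hback : ∀ j, j < i → parityStrategy n x j = parityStrategy n y j) :
    parityStrategy n x i = parityStrategy n y i := by
  by_cases hi : (i : ℕ) = 0
  · have hpar :
        hatParity {j : Fin n | (j : ℕ) ≠ 0} x = hatParity {j : Fin n | (j : ℕ) ≠ 0} y :=
      sum_congr rfl fun j hj => by
        rw [hfront j (Fin.lt_def.2 (by simp at hj; omega))]
    simp only [parityStrategy, if_pos hi, hpar]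
  · rw [parityStrategy_of_ne_zero x hi, parityStrategy_of_ne_zero y hi]
    let first : Fin n := ⟨0, by omega⟩
    have hparity :
        hatParity {j : Fin n | (j : ℕ) ≠ 0} x = hatParity {j : Fin n | (j : ℕ) ≠ 0} y := by
      have hfirst := hback first (Fin.lt_def.2 (by simp [first]; omega))
      simp only [parityStrategy, first, if_pos] at hfirst
      have hdecide : ∀ a b : ZMod 2, decide (a = 1) = decide (b = 1) → a = b := by decide
      exact hdecide _ _ hfirst
    refine eq_of_hatParity_eq (by simpa using hi) (fun j hj hji => ?_) hparity
    rcases lt_or_gt_of_ne hji with hlt | hgt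
    · have hj0 : (j : ℕ) ≠ 0 := by simpa using hj
      simpa [parityStrategy_of_ne_zero _ hj0] using hback j hlt
    · exact hfront j hgt

lemma parityStrategy_wrong_subsingleton (n : ℕ) (x : Fin n → Bool) :
    {i : Fin n | parityStrategy n x i ≠ x i}.Subsingleton := by
  have hwrong : ∀ i ∈ {i : Fin n | parityStrategy n x i ≠ x i}, (i : ℕ) = 0 :=
    fun i hi => by_contra fun h0 => hi (parityStrategy_of_ne_zero x h0)
  exact fun a ha b hb => Fin.ext ((hwrong a ha).trans (hwrong b hb).symm)

/-- For every natural number `n` there is a strategy for the `n`-player, two-colour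
hat game that guarantees at most one wrong guess. -/
theorem finite_hat_game_at_most_one_error (n : ℕ) :
    ∃ guess : (Fin n → Bool) → Fin n → Bool,
      (∀ (i : Fin n) (x y : Fin n → Bool),
          (∀ j, i < j → x j = y j) → (∀ j, j < i → guess x j = guess y j) →
          guess x i = guess y i) ∧
      (∀ x : Fin n → Bool, {i : Fin n | guess x i ≠ x i}.Subsingleton) :=
  ⟨parityStrategy n, parityStrategy_eq_of_visible_eq, parityStrategy_wrong_subsingleton n⟩
end

section
/- For every natural number n and every k ≥ 1 there is a strategy for the n-player hat game with k hat colours that guarantees at most one wrong guess. Precisely: there exists a function guess : (Fin n → Fin k) → Fin n → Fin k such that (a) for every i : Fin n and all x, y : Fin n → Fin k, if x j = y j for all j > i and guess x j = guess y j for all j < i, then guess x i = guess y i; and (b) for every x : Fin n → Fin k, the set {i : Fin n | guess x i ≠ x i} has at most one element. -/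
/-!
Colours are added in the cyclic group `Fin k`. The first player announces the sum of all hats
they see and may be wrong. Every later player has heard that sum and the (correct) guesses of
the players before them, and sees the hats of the players after them; subtracting all these
from the announced sum leaves exactly their own colour. So only the first player can err.
-/

open Finset

variable {ι G : Type*}

theorem Finset.apply_eq_of_sum_eq_of_eqOn_erase [DecidableEq ι] [AddCommGroup G] {s : Finset ι}
    {i : ι} (hi : i ∈ s) {f g : ι → G} (hsum : ∑ j ∈ s, f j = ∑ j ∈ s, g j)
    (hfg : ∀ j ∈ s, j ≠ i → f j = g j) : f i = g i := by
  rw [← add_sum_erase s f hi, ← add_sum_erase s g hi,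
    sum_congr rfl fun j hj => hfg j (mem_of_mem_erase hj) (ne_of_mem_erase hj)] at hsum
  exact add_right_cancel hsum

namespace HatGame

def IsStrategy {α : Type*} [Preorder ι] (guess : (ι → α) → ι → α) : Prop :=
  ∀ (i : ι) (x y : ι → α), (∀ j, i < j → x j = y j) → (∀ j, j < i → guess x j = guess y j) →
    guess x i = guess y i

variable [Fintype ι] [LinearOrder ι] [AddCommGroup G]

def sumStrategy (x : ι → G) (i : ι) : G :=
  if ∀ j, i ≤ j then ∑ j ∈ univ.erase i, x j else x i

theorem sumStrategy_of_isBot {x : ι → G} {i : ι} (hi : IsBot i) :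
    sumStrategy x i = ∑ j ∈ univ.erase i, x j :=
  if_pos hi

theorem sumStrategy_of_not_isBot {x : ι → G} {i : ι} (hi : ¬IsBot i) :
    sumStrategy x i = x i :=
  if_neg hi

theorem isStrategy_sumStrategy : IsStrategy (sumStrategy (ι := ι) (G := G)) := by
  intro i x y hxy hguess
  by_cases hi : IsBot i
  · rw [sumStrategy_of_isBot hi, sumStrategy_of_isBot hi]
    exact sum_congr rfl fun j hj => hxy j ((hi j).lt_of_ne (ne_of_mem_erase hj).symm)
  obtain ⟨b, hb⟩ : ∃ b : ι, IsBot b :=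
    ⟨univ.min' ⟨i, mem_univ i⟩, fun j => min'_le _ _ (mem_univ j)⟩
  have hbi : b < i := (hb i).lt_of_ne fun h => hi (h ▸ hb)
  have hsum : ∑ j ∈ univ.erase b, x j = ∑ j ∈ univ.erase b, y j := by
    simpa only [sumStrategy_of_isBot hb] using hguess b hbi
  rw [sumStrategy_of_not_isBot hi, sumStrategy_of_not_isBot hi]
  refine apply_eq_of_sum_eq_of_eqOn_erase (mem_erase.2 ⟨hbi.ne', mem_univ i⟩) hsum ?_
  intro j hj hji
  rcases hji.lt_or_gt with hlt | hgt
  · have hj : ¬IsBot j := fun h => ne_of_mem_erase hj (le_antisymm (h b) (hb j))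
    simpa only [sumStrategy_of_not_isBot hj] using hguess j hlt
  · exact hxy j hgt

theorem subsingleton_sumStrategy_ne (x : ι → G) : {i | sumStrategy x i ≠ x i}.Subsingleton := by
  have hbot : ∀ i ∈ {i | sumStrategy x i ≠ x i}, IsBot i := fun i hi => by
    by_contra h
    exact hi (sumStrategy_of_not_isBot h)
  exact fun i hi j hj => le_antisymm (hbot i hi j) (hbot j hj i)

end HatGame

/-- For every `n` and every `k ≥ 1` there is a strategy for the `n`-player hat game
with `k` hat colours that guarantees at most one wrong guess. -/
theorem finite_k_colour_hat_game_at_most_one_error (n k : ℕ) (hk : 1 ≤ k) :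
    ∃ guess : (Fin n → Fin k) → Fin n → Fin k,
      (∀ (i : Fin n) (x y : Fin n → Fin k),
          (∀ j, i < j → x j = y j) → (∀ j, j < i → guess x j = guess y j) →
          guess x i = guess y i) ∧
      (∀ x : Fin n → Fin k, {i : Fin n | guess x i ≠ x i}.Subsingleton) := by
  have : NeZero k := ⟨by omega⟩
  exact ⟨HatGame.sumStrategy, HatGame.isStrategy_sumStrategy,
    HatGame.subsingleton_sumStrategy_ne⟩
end

section
/- If there exists a nonprincipal (free) ultrafilter on ℕ, then there exists a parity function. -/
/-!
Let `U` be a free ultrafilter on `ℕ` and let `p x` be the `U`-limit of the parities of the partial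
sums `x 0 + ⋯ + x (n - 1)`. If `x` and `y` differ only at `k`, their partial parities are opposite
for every `n > k`, i.e. on a cofinite set. A free ultrafilter contains every cofinite set and
exactly one of each set and its complement, so the two limits are opposite as well.
-/

open Finset Filter

theorem Finset.sum_sub_sum_eq_of_forall_ne {ι G : Type*} [AddCommGroup G] {s : Finset ι}
    {x y : ι → G} {k : ι} (hk : k ∈ s) (h : ∀ i ≠ k, x i = y i) :
    ∑ i ∈ s, x i - ∑ i ∈ s, y i = x k - y k := by
  rw [← sum_sub_distrib]
  exact sum_eq_single_of_mem k hk fun i _ hik => by rw [h i hik, sub_self]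

theorem Bool.eq_not_of_sub_eq_sub {a b c d : Bool} (h : a - b = c - d) (hcd : c ≠ d) :
    a = !b := by
  decide +revert

/-- Addition on `Bool` is `xor` (its `BooleanRing` structure), so this is the parity of
`x 0 + ⋯ + x (n - 1)`. -/
def partialParity (x : ℕ → Bool) (n : ℕ) : Bool := ∑ m ∈ range n, x m

theorem partialParity_eq_not_of_lt {x y : ℕ → Bool} {k n : ℕ} (h : {m | x m ≠ y m} = {k})
    (hn : k < n) : partialParity x n = !partialParity y n := by
  have hoff : ∀ m ≠ k, x m = y m := fun m hm =>
    by_contra fun hne => hm (h ▸ hne : m ∈ ({k} : Set ℕ))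
  have hk : x k ≠ y k := (h ▸ rfl : k ∈ {m | x m ≠ y m})
  exact Bool.eq_not_of_sub_eq_sub (sum_sub_sum_eq_of_forall_ne (mem_range.2 hn) hoff) hk

theorem Ultrafilter.eventually_iff_not_eventually_of_le_cofinite {α : Type*} {U : Ultrafilter α}
    (hU : (U : Filter α) ≤ cofinite) {p q : α → Prop} (h : ∀ᶠ a in cofinite, p a ↔ ¬q a) :
    (∀ᶠ a in U, p a) ↔ ¬∀ᶠ a in U, q a := by
  rw [← Ultrafilter.eventually_not]
  exact eventually_congr (hU h)

/-- If there exists a nonprincipal (free) ultrafilter on `ℕ`, then there exists a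
parity function. -/
theorem parity_function_of_nonprincipal_ultrafilter
    (h : ∃ U : Ultrafilter ℕ, ∀ a : ℕ, U ≠ pure a) :
    ∃ p : (ℕ → Bool) → Bool,
      ∀ x y : ℕ → Bool, (∃ n : ℕ, {m | x m ≠ y m} = {n}) → p x ≠ p y := by
  classical
  obtain ⟨U, hU⟩ := h
  have hfree : (U : Filter ℕ) ≤ cofinite :=
    U.le_cofinite_or_eq_pure.resolve_right fun ⟨a, ha⟩ => hU a ha
  refine ⟨fun x => decide (∀ᶠ n in U, partialParity x n), ?_⟩
  rintro x y ⟨k, hk⟩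
  have hflip : ∀ᶠ n in cofinite, partialParity x n ↔ ¬partialParity y n := by
    rw [Nat.cofinite_eq_atTop]
    filter_upwards [eventually_gt_atTop k] with n hn
    simp [partialParity_eq_not_of_lt hk hn]
  rw [Ne, decide_eq_decide, Ultrafilter.eventually_iff_not_eventually_of_le_cofinite hfree hflip]
  exact not_iff_self
end

section
/- If there exists an E₀-transversal on ℕ → Bool, then there exists a parity function. -/
/-!
Take `p x` to be the parity of the number of coordinates at which `x` differs from its
representative `T x`. If `x` and `y` differ exactly at `n`, then `T x = T y`, and the set where
`y` differs from this common representative is the one for `x` with `n` toggled.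
-/

theorem Set.odd_ncard_symmDiff_singleton_iff {α : Type*} {s : Set α} (hs : s.Finite) (a : α) :
    Odd (symmDiff s {a}).ncard ↔ ¬Odd s.ncard := by
  by_cases ha : a ∈ s
  · have hdiff : symmDiff s {a} = s \ {a} := by
      ext b; by_cases hb : b = a <;> simp [Set.mem_symmDiff, hb, ha]
    rw [hdiff, ← Set.ncard_sdiff_singleton_add_one ha hs, Nat.odd_add_one, not_not]
  · have hins : symmDiff s {a} = insert a s := by
      ext b; by_cases hb : b = a <;> simp [Set.mem_symmDiff, hb, ha]
    rw [hins, Set.ncard_insert_of_notMem ha hs, Nat.odd_add_one]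

theorem setOf_ne_eq_symmDiff {ι : Type*} (t x y : ι → Bool) :
    {m | t m ≠ y m} = symmDiff {m | t m ≠ x m} {m | x m ≠ y m} := by
  ext m
  simp only [Set.mem_ofPred_eq, Set.mem_symmDiff]
  generalize t m = a, x m = b, y m = c
  revert a b c
  decide

/-- If there exists an `E₀`-transversal on `ℕ → Bool`, then there exists a parity
function. -/
theorem parity_function_of_E0_transversal
    (h : ∃ T : (ℕ → Bool) → (ℕ → Bool),
        (∀ x, {n | T x n ≠ x n}.Finite) ∧
        (∀ x y, {n | x n ≠ y n}.Finite → T x = T y)) :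
    ∃ p : (ℕ → Bool) → Bool,
      ∀ x y : ℕ → Bool, (∃ n : ℕ, {m | x m ≠ y m} = {n}) → p x ≠ p y := by
  obtain ⟨T, hfin, hinv⟩ := h
  refine ⟨fun x => decide (Odd {n | T x n ≠ x n}.ncard), ?_⟩
  rintro x y ⟨n, hn⟩
  have hT : T x = T y := hinv x y (hn ▸ Set.finite_singleton n)
  have hy : {m | T y m ≠ y m} = symmDiff {m | T x m ≠ x m} {n} := by
    rw [← hT, ← hn, setOf_ne_eq_symmDiff _ x]
  simp only [hy, Set.odd_ncard_symmDiff_singleton_iff (hfin x), ne_eq, decide_eq_decide]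
  tauto
end

section
/- If there exists a nonprincipal (free) ultrafilter on ℕ, then for every k ≥ 2 there exists a k-arity function. -/
/-!
Take `c x` to be the limit, along the free ultrafilter `U`, of the partial sums
`x 0 + ⋯ + x (N - 1)` in `Fin k`; such limits exist because `Fin k` is finite. If `x` and `y`
differ only at `n`, their partial sums differ by the constant `x n - y n ≠ 0` for all `N > n`,
and `U` contains the set of those `N` because it is free.
-/

open Filter Finset

namespace Ultrafilter

variable {α β : Type*} [Finite β]

noncomputable def limFinite (U : Ultrafilter α) (f : α → β) : β :=
  (U.map f).eq_pure_of_finite.choose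

theorem eventually_eq_limFinite (U : Ultrafilter α) (f : α → β) :
    ∀ᶠ a in U, f a = U.limFinite f := by
  have hmap : U.map f = pure (U.limFinite f) := (U.map f).eq_pure_of_finite.choose_spec
  have hmem : ({U.limFinite f} : Set β) ∈ U.map f := by
    rw [hmap]
    exact mem_pure.2 rfl
  exact hmem

theorem le_atTop_of_forall_ne_pure {U : Ultrafilter ℕ} (hU : ∀ a, U ≠ pure a) :
    (U : Filter ℕ) ≤ atTop := by
  rcases U.le_cofinite_or_eq_pure with hcof | ⟨a, rfl⟩
  · rwa [Nat.cofinite_eq_atTop] at hcof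
  · exact absurd rfl (hU a)

end Ultrafilter

section UltraSum

variable {G : Type*} [AddCommGroup G]

theorem sum_range_sub_sum_range_of_eq_of_ne {x y : ℕ → G} {n N : ℕ}
    (hxy : ∀ m, m ≠ n → x m = y m) (hN : n < N) :
    ∑ i ∈ range N, x i - ∑ i ∈ range N, y i = x n - y n := by
  rw [← sum_sub_distrib]
  exact sum_eq_single_of_mem n (mem_range.2 hN) fun m _ hm => by rw [hxy m hm, sub_self]

variable [Finite G]

noncomputable def ultraSum (U : Ultrafilter ℕ) (x : ℕ → G) : G :=
  U.limFinite fun N => ∑ i ∈ range N, x i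

theorem ultraSum_sub_ultraSum_of_eq_of_ne {U : Ultrafilter ℕ} (hU : (U : Filter ℕ) ≤ atTop)
    {x y : ℕ → G} {n : ℕ} (hxy : ∀ m, m ≠ n → x m = y m) :
    ultraSum U x - ultraSum U y = x n - y n := by
  obtain ⟨N, hNx, hNy, hN⟩ :=
    ((U.eventually_eq_limFinite fun N => ∑ i ∈ range N, x i).and
      ((U.eventually_eq_limFinite fun N => ∑ i ∈ range N, y i).and
        (hU (eventually_gt_atTop n)))).exists
  rw [ultraSum, ultraSum, ← hNx, ← hNy]
  exact sum_range_sub_sum_range_of_eq_of_ne hxy hN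

end UltraSum

/-- If there exists a nonprincipal (free) ultrafilter on `ℕ`, then for every `k ≥ 2`
there exists a `k`-arity function. -/
theorem k_arity_function_of_nonprincipal_ultrafilter
    (h : ∃ U : Ultrafilter ℕ, ∀ a : ℕ, U ≠ pure a) (k : ℕ) (hk : 2 ≤ k) :
    ∃ c : (ℕ → Fin k) → Fin k,
      ∀ x y : ℕ → Fin k, (∃ n : ℕ, {m | x m ≠ y m} = {n}) → c x ≠ c y := by
  obtain ⟨U, hU⟩ := h
  have : NeZero k := NeZero.of_pos (by omega)
  refine ⟨ultraSum U, fun x y ⟨n, hn⟩ hc => ?_⟩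
  have hdiff : x n ≠ y n := (Set.ext_iff.1 hn n).2 rfl
  have hxy : ∀ m, m ≠ n → x m = y m := fun m hm => by
    by_contra hne
    exact hm ((Set.ext_iff.1 hn m).1 hne)
  have hsub := ultraSum_sub_ultraSum_of_eq_of_ne (Ultrafilter.le_atTop_of_forall_ne_pure hU) hxy
  rw [hc, sub_self, eq_comm, sub_eq_zero] at hsub
  exact hdiff hsub
end

section
/- If there exists an E₀-transversal on ℕ → Bool, then for every k ≥ 2 there exists a k-arity function. -/
/-!
Code `x : ℕ → Fin k` as the indicator of its graph, a Boolean sequence on `ℕ × Fin k ≃ ℕ`.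
Both the coding and the decoding respect `E₀`, so a transversal `T` for Boolean sequences
yields a transversal `r` for `ℕ → Fin k`. Viewing `Fin k` as the group `ℤ/k`, colour `x` by
`∑ₙ (x n - r x n)`, a finite sum. Changing `x` at one coordinate `m` does not change `r x`,
so the colour changes by `x m - y m ≠ 0`.
-/

open Filter

variable {ι κ α β G : Type*}

def IsE0Transversal (T : (ι → α) → (ι → α)) : Prop :=
  (∀ x, T x =ᶠ[cofinite] x) ∧ ∀ x y, x =ᶠ[cofinite] y → T x = T y

theorem IsE0Transversal.retract {T : (κ → β) → (κ → β)} (hT : IsE0Transversal T)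
    {e : (ι → α) → (κ → β)} {d : (κ → β) → (ι → α)} (hde : ∀ x, d (e x) = x)
    (he : ∀ x y, x =ᶠ[cofinite] y → e x =ᶠ[cofinite] e y)
    (hd : ∀ b b', b =ᶠ[cofinite] b' → d b =ᶠ[cofinite] d b') :
    IsE0Transversal (d ∘ T ∘ e) :=
  ⟨fun x => (hd _ _ (hT.1 (e x))).trans (.of_eq (hde x)),
    fun x y hxy => congrArg d (hT.2 _ _ (he x y hxy))⟩

section GraphCoding

variable (σ : κ ≃ ι × α)

def graphIndicator [DecidableEq α] (x : ι → α) (j : κ) : Bool :=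
  decide (x (σ j).1 = (σ j).2)

noncomputable def graphDecode [Nonempty α] (b : κ → Bool) (i : ι) : α :=
  Classical.epsilon fun a => b (σ.symm (i, a))

theorem graphDecode_graphIndicator [DecidableEq α] [Nonempty α] (x : ι → α) :
    graphDecode σ (graphIndicator σ x) = x := by
  funext i
  obtain hspec : graphIndicator σ x (σ.symm (i, graphDecode σ (graphIndicator σ x) i)) :=
    Classical.epsilon_spec (p := fun a => graphIndicator σ x (σ.symm (i, a)))
      ⟨x i, by simp [graphIndicator]⟩
  simpa [graphIndicator, eq_comm] using hspec

theorem graphIndicator_eventuallyEq [DecidableEq α] [Finite α] {x y : ι → α}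
    (hxy : x =ᶠ[cofinite] y) : graphIndicator σ x =ᶠ[cofinite] graphIndicator σ y := by
  refine ((Set.Finite.prod hxy Set.finite_univ).preimage σ.injective.injOn).subset ?_
  intro j hj
  refine ⟨fun h => hj ?_, Set.mem_univ _⟩
  show decide (x (σ j).1 = (σ j).2) = decide (y (σ j).1 = (σ j).2)
  rw [show x (σ j).1 = y (σ j).1 from h]

theorem graphDecode_eventuallyEq [Nonempty α] {b b' : κ → Bool} (hbb' : b =ᶠ[cofinite] b') :
    graphDecode σ b =ᶠ[cofinite] graphDecode σ b' := by
  refine (Set.Finite.image (fun j => (σ j).1) hbb').subset ?_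
  intro i hi
  by_contra hnot
  refine hi (congrArg Classical.epsilon (funext fun a => congrArg (· = true) ?_))
  by_contra hne
  exact hnot ⟨σ.symm (i, a), hne, by simp⟩

end GraphCoding

theorem exists_isE0Transversal_of_equiv [Finite α] [Nonempty α]
    (hT : ∃ T : (κ → Bool) → (κ → Bool), IsE0Transversal T) (σ : κ ≃ ι × α) :
    ∃ r : (ι → α) → (ι → α), IsE0Transversal r := by
  classical
  obtain ⟨T, hT⟩ := hT
  exact ⟨_, hT.retract (graphDecode_graphIndicator σ) (fun _ _ => graphIndicator_eventuallyEq σ)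
    (fun _ _ => graphDecode_eventuallyEq σ)⟩

theorem hasFiniteSupport_sub_of_eventuallyEq [AddGroup G] {f g : ι → G}
    (h : f =ᶠ[cofinite] g) : Function.HasFiniteSupport fun n => f n - g n :=
  Set.Finite.subset h fun _ hn => sub_ne_zero.mp hn

namespace IsE0Transversal

variable [AddCommGroup G] {r : (ι → G) → (ι → G)}

theorem finsum_sub_sub_finsum_sub (hr : IsE0Transversal r) {x y : ι → G}
    (hxy : x =ᶠ[cofinite] y) :
    ∑ᶠ n, (x n - r x n) - ∑ᶠ n, (y n - r y n) = ∑ᶠ n, (x n - y n) := by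
  rw [← hr.2 x y hxy, ← finsum_sub_distrib
    (hasFiniteSupport_sub_of_eventuallyEq (hr.1 x).symm)
    (hasFiniteSupport_sub_of_eventuallyEq (hxy.symm.trans (hr.1 x).symm))]
  simp only [sub_sub_sub_cancel_right]

theorem finsum_sub_ne_of_single (hr : IsE0Transversal r) {x y : ι → G} {m : ι}
    (hxy : {n | x n ≠ y n} = {m}) :
    ∑ᶠ n, (x n - r x n) ≠ ∑ᶠ n, (y n - r y n) := by
  have hfin : x =ᶠ[cofinite] y := show {n | x n ≠ y n}.Finite by
    rw [hxy]; exact Set.finite_singleton m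
  have hm : x m ≠ y m := (hxy ▸ rfl : m ∈ {n | x n ≠ y n})
  rw [← sub_ne_zero, hr.finsum_sub_sub_finsum_sub hfin, finsum_eq_single _ m]
  · exact sub_ne_zero.mpr hm
  · intro n hn
    refine sub_eq_zero.mpr (not_not.mp fun hne => hn ?_)
    exact (hxy ▸ hne : n ∈ ({m} : Set ι))

end IsE0Transversal

/-- If there exists an `E₀`-transversal on `ℕ → Bool`, then for every `k ≥ 2` there
exists a `k`-arity function. -/
theorem k_arity_function_of_E0_transversal
    (h : ∃ T : (ℕ → Bool) → (ℕ → Bool),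
        (∀ x, {n | T x n ≠ x n}.Finite) ∧
        (∀ x y, {n | x n ≠ y n}.Finite → T x = T y))
    (k : ℕ) (hk : 2 ≤ k) :
    ∃ c : (ℕ → Fin k) → Fin k,
      ∀ x y : ℕ → Fin k, (∃ n : ℕ, {m | x m ≠ y m} = {n}) → c x ≠ c y := by
  have : NeZero k := ⟨by omega⟩
  obtain ⟨r, hr⟩ := exists_isE0Transversal_of_equiv h (Nat.divModEquiv k)
  exact ⟨fun x => ∑ᶠ n, (x n - r x n), fun x y ⟨_, hm⟩ => hr.finsum_sub_ne_of_single hm⟩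
end

section
/- If there exists a parity function, then there is a strategy for the infinite two-colour hat game guaranteeing at most one wrong guess. Precisely: there exists a function guess : (ℕ → Bool) → ℕ → Bool such that (a) for every n : ℕ and all x, y : ℕ → Bool, if x m = y m for all m > n and guess x m = guess y m for all m < n, then guess x n = guess y n; and (b) for every x : ℕ → Bool, the set {n | guess x n ≠ x n} has at most one element. -/
/-!
Player `n` assumes that everyone behind them guessed correctly and that their own hat is
the one making the parity function `true` on the sequence "guesses before `n`, own hat,
hats after `n`". Since every player achieves this, the sequences of players `n` and `n + 1`
both have parity `true`; they differ at most at `n + 1`, in the guess versus the hat of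
player `n + 1`, so by the parity property that player guessed correctly. Only player `0`
can be wrong.
-/

open Function

section Parity

variable {ι : Type*}

def IsParity (p : (ι → Bool) → Bool) : Prop :=
  ∀ x y : ι → Bool, (∃ n : ι, {m | x m ≠ y m} = {n}) → p x ≠ p y

variable [DecidableEq ι]

theorem setOf_update_ne_update {β : Type*} (f : ι → β) (i : ι) {b c : β} (h : b ≠ c) :
    {j | update f i b j ≠ update f i c j} = {i} := by
  ext j
  by_cases hj : j = i
  · subst hj; simpa
  · simp [hj]

variable {p : (ι → Bool) → Bool}

theorem IsParity.apply_update_ne (hp : IsParity p) (f : ι → Bool) (i : ι) {b c : Bool}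
    (h : b ≠ c) : p (update f i b) ≠ p (update f i c) :=
  hp _ _ ⟨i, setOf_update_ne_update f i h⟩

theorem IsParity.apply_update_apply_update_true (hp : IsParity p) (f : ι → Bool) (i : ι) :
    p (update f i (p (update f i true))) = true := by
  cases hb : p (update f i true)
  · simpa [hb] using hp.apply_update_ne f i Bool.false_ne_true
  · exact hb

end Parity

section Prefix

variable {α : Type*}

def prefixWith (g x : ℕ → α) (n : ℕ) : ℕ → α := fun m => if m < n then g m else x m

variable (g x : ℕ → α) (n : ℕ)

theorem prefixWith_self : prefixWith g x n n = x n := by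
  simp [prefixWith]

theorem prefixWith_succ : prefixWith g x (n + 1) = update (prefixWith g x n) n (g n) := by
  funext m
  rcases lt_trichotomy m n with hm | rfl | hm
  · simp [prefixWith, hm, hm.ne, Nat.lt_succ_of_lt hm]
  · simp [prefixWith]
  · simp [prefixWith, hm.ne', hm.asymm, Nat.not_lt.2 (Nat.succ_le_of_lt hm)]

end Prefix

section Strategy

def parityGuess (p : (ℕ → Bool) → Bool) (x : ℕ → Bool) : ℕ → Bool
  | n => p (update (fun m => if _ : m < n then parityGuess p x m else x m) n true)

variable (p : (ℕ → Bool) → Bool)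

theorem parityGuess_eq (x : ℕ → Bool) (n : ℕ) :
    parityGuess p x n = p (update (prefixWith (parityGuess p x) x n) n true) := by
  rw [parityGuess]
  rfl

theorem parityGuess_eq_of_forall {n : ℕ} {x y : ℕ → Bool} (hxy : ∀ m, n < m → x m = y m)
    (hg : ∀ m, m < n → parityGuess p x m = parityGuess p y m) :
    parityGuess p x n = parityGuess p y n := by
  rw [parityGuess_eq, parityGuess_eq]
  congr 1
  funext m
  rcases lt_trichotomy m n with hm | rfl | hm
  · simp [prefixWith, hm, hm.ne, hg m hm]
  · simp
  · simp [prefixWith, hm.ne', hm.asymm, hxy m hm]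

variable {p}

theorem IsParity.apply_prefixWith_parityGuess (hp : IsParity p) (x : ℕ → Bool) (n : ℕ) :
    p (prefixWith (parityGuess p x) x (n + 1)) = true := by
  rw [prefixWith_succ, parityGuess_eq]
  exact hp.apply_update_apply_update_true _ n

theorem IsParity.parityGuess_succ (hp : IsParity p) (x : ℕ → Bool) (n : ℕ) :
    parityGuess p x (n + 1) = x (n + 1) := by
  by_contra hne
  set z := prefixWith (parityGuess p x) x (n + 1)
  have hz : update z (n + 1) (x (n + 1)) = z :=
    update_eq_self_iff.2 (prefixWith_self _ _ _).symm
  apply hp.apply_update_ne z (n + 1) hne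
  rw [← prefixWith_succ, hz, hp.apply_prefixWith_parityGuess, hp.apply_prefixWith_parityGuess]

theorem IsParity.setOf_parityGuess_ne_subset (hp : IsParity p) (x : ℕ → Bool) :
    {n | parityGuess p x n ≠ x n} ⊆ {0} := by
  rintro (_ | n) hn
  · rfl
  · exact absurd (hp.parityGuess_succ x n) hn

end Strategy

/-- If there exists a parity function, then there is a strategy for the infinite
two-colour hat game guaranteeing at most one wrong guess. -/
theorem infinite_hat_game_of_parity_function
    (h : ∃ p : (ℕ → Bool) → Bool,
        ∀ x y : ℕ → Bool, (∃ n : ℕ, {m | x m ≠ y m} = {n}) → p x ≠ p y) :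
    ∃ guess : (ℕ → Bool) → ℕ → Bool,
      (∀ (n : ℕ) (x y : ℕ → Bool),
          (∀ m, n < m → x m = y m) → (∀ m, m < n → guess x m = guess y m) →
          guess x n = guess y n) ∧
      (∀ x : ℕ → Bool, {n : ℕ | guess x n ≠ x n}.Subsingleton) := by
  obtain ⟨p, hp : IsParity p⟩ := h
  exact ⟨parityGuess p, fun _ _ _ => parityGuess_eq_of_forall p,
    fun x => Set.subsingleton_singleton.anti (hp.setOf_parityGuess_ne_subset x)⟩
end

section
/- For every k ≥ 1, if there exists a k-arity function, then there is a strategy for the infinite k-colour hat game guaranteeing at most one wrong guess. Precisely: there exists a function guess : (ℕ → Fin k) → ℕ → Fin k such that (a) for every n : ℕ and all x, y : ℕ → Fin k, if x m = y m for all m > n and guess x m = guess y m for all m < n, then guess x n = guess y n; and (b) for every x : ℕ → Fin k, the set {n | guess x n ≠ x n} has at most one element. -/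
/-!
Fix a value `t` and let player `n` guess the colour `a` with
`c (g₀, …, gₙ₋₁, a, xₙ₊₁, xₙ₊₂, …) = t`, where the `gᵢ` are the guesses already heard.
Such an `a` exists because `c` is injective, hence bijective, along each coordinate.
Then `c` takes the value `t` on every hybrid `(g₀, …, gₙ, xₙ₊₁, …)`; for `n ≥ 1` two consecutive
hybrids differ at most at coordinate `n`, so player `n` guesses right and only player `0`
can be wrong.
-/

open Function

variable {α : Type*}

def IsArityFunction (c : (ℕ → α) → α) : Prop :=
  ∀ x y : ℕ → α, (∃ n : ℕ, {m | x m ≠ y m} = {n}) → c x ≠ c y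

theorem setOf_update_ne_eq_singleton {f : ℕ → α} {n : ℕ} {a : α} (h : a ≠ f n) :
    {m | update f n a m ≠ f m} = {n} := by
  ext m
  rcases eq_or_ne m n with rfl | hm
  · simpa using h
  · simp [hm]

namespace IsArityFunction

variable {c : (ℕ → α) → α}

theorem apply_update_ne (hc : IsArityFunction c) {f : ℕ → α} {n : ℕ} {a : α} (h : a ≠ f n) :
    c (update f n a) ≠ c f :=
  hc _ _ ⟨n, setOf_update_ne_eq_singleton h⟩

theorem injective_update (hc : IsArityFunction c) (f : ℕ → α) (n : ℕ) :
    Injective fun a => c (update f n a) := by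
  intro a b hab
  by_contra hne
  refine hc.apply_update_ne (f := update f n b) (n := n) (a := a) (by simpa using hne) ?_
  simpa using hab

theorem surjective_update [Finite α] (hc : IsArityFunction c) (f : ℕ → α) (n : ℕ) :
    Surjective fun a => c (update f n a) :=
  Finite.injective_iff_surjective.mp (hc.injective_update f n)

end IsArityFunction

def hybrid (g x : ℕ → α) (n : ℕ) : ℕ → α := fun m => if m < n then g m else x m

theorem update_hybrid_self (g x : ℕ → α) (n : ℕ) :
    update (hybrid g x n) n (g n) = hybrid g x (n + 1) := by
  ext m
  rcases lt_trichotomy m n with hm | rfl | hm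
  · simp [hybrid, hm, hm.ne, hm.trans n.lt_succ_self]
  · simp [hybrid]
  · simp [hybrid, hm.ne', Nat.lt_asymm hm, not_le.mpr hm]

theorem hybrid_self (g x : ℕ → α) (n : ℕ) : hybrid g x n n = x n := by
  simp [hybrid]

noncomputable def hatStrategy [Nonempty α] (c : (ℕ → α) → α) (t : α) (x : ℕ → α) : ℕ → α
  | n => invFun (fun a => c (update (fun m => if m < n then hatStrategy c t x m else x m) n a)) t

section hatStrategy

variable [Nonempty α] {c : (ℕ → α) → α} {t : α}

theorem hatStrategy_apply (x : ℕ → α) (n : ℕ) :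
    hatStrategy c t x n =
      invFun (fun a => c (update (hybrid (hatStrategy c t x) x n) n a)) t := by
  rw [hatStrategy]
  rfl

theorem hatStrategy_congr {x y : ℕ → α} {n : ℕ}
    (hxy : ∀ m, n < m → x m = y m)
    (hg : ∀ m, m < n → hatStrategy c t x m = hatStrategy c t y m) :
    hatStrategy c t x n = hatStrategy c t y n := by
  have : ∀ a, update (hybrid (hatStrategy c t x) x n) n a =
      update (hybrid (hatStrategy c t y) y n) n a := by
    intro a
    ext m
    rcases lt_trichotomy m n with hm | rfl | hm
    · simp [hybrid, hm, hm.ne, hg m hm]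
    · simp
    · simp [hybrid, hm.ne', Nat.lt_asymm hm, hxy m hm]
  simp only [hatStrategy_apply, this]

theorem apply_hybrid_hatStrategy [Finite α] (hc : IsArityFunction c) (x : ℕ → α) (n : ℕ) :
    c (hybrid (hatStrategy c t x) x (n + 1)) = t := by
  rw [← update_hybrid_self, hatStrategy_apply]
  exact rightInverse_invFun (hc.surjective_update _ n) t

theorem hatStrategy_apply_eq_of_ne_zero [Finite α] (hc : IsArityFunction c) (x : ℕ → α)
    {n : ℕ} (hn : n ≠ 0) : hatStrategy c t x n = x n := by
  obtain ⟨p, rfl⟩ := Nat.exists_eq_succ_of_ne_zero hn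
  by_contra hne
  set g := hatStrategy c t x
  refine hc.apply_update_ne (f := hybrid g x (p + 1)) (n := p + 1) (a := g (p + 1))
    (by rwa [hybrid_self]) ?_
  rw [update_hybrid_self, apply_hybrid_hatStrategy hc, apply_hybrid_hatStrategy hc]

theorem setOf_hatStrategy_ne_subsingleton [Finite α] (hc : IsArityFunction c) (x : ℕ → α) :
    {n | hatStrategy c t x n ≠ x n}.Subsingleton :=
  Set.subsingleton_singleton.anti fun _ hn =>
    by_contra fun h0 => hn (hatStrategy_apply_eq_of_ne_zero hc x h0)

end hatStrategy

/-- For every `k ≥ 1`, if there exists a `k`-arity function, then there is a strategy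
for the infinite `k`-colour hat game guaranteeing at most one wrong guess. -/
theorem infinite_k_colour_hat_game_of_k_arity_function (k : ℕ) (hk : 1 ≤ k)
    (h : ∃ c : (ℕ → Fin k) → Fin k,
        ∀ x y : ℕ → Fin k, (∃ n : ℕ, {m | x m ≠ y m} = {n}) → c x ≠ c y) :
    ∃ guess : (ℕ → Fin k) → ℕ → Fin k,
      (∀ (n : ℕ) (x y : ℕ → Fin k),
          (∀ m, n < m → x m = y m) → (∀ m, m < n → guess x m = guess y m) →
          guess x n = guess y n) ∧
      (∀ x : ℕ → Fin k, {n : ℕ | guess x n ≠ x n}.Subsingleton) := by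
  obtain ⟨c, hc⟩ := h
  have : Nonempty (Fin k) := ⟨⟨0, hk⟩⟩
  exact ⟨hatStrategy c ⟨0, hk⟩, fun _ _ _ => hatStrategy_congr,
    setOf_hatStrategy_ne_subsingleton hc⟩
end

section
/- The Hamming graph on ℕ → Bool has countable colouring number: there exists a well-founded linear order on ℕ → Bool such that for every x : ℕ → Bool, the set of y : ℕ → Bool with y < x and y adjacent to x in the Hamming graph is finite. -/
/-!
Call two vertices equivalent when they differ in finitely many coordinates, fix a representative
of each class, and let the defect of `x` be the finite set of coordinates where `x` differs from
the representative of its class. Adjacent vertices are equivalent, and flipping a coordinate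
outside the defect of `x` enlarges the defect. So ordering vertices first by the size of their
defect and then by an arbitrary well-order, the neighbours below `x` are obtained by flipping a
coordinate in the finite defect of `x`.
-/

/-- The Hamming graph on `ℕ → Bool`: two vertices are adjacent iff they differ at
exactly one coordinate. -/
def hammingGraph : SimpleGraph (ℕ → Bool) where
  Adj x y := ∃ n : ℕ, {m | x m ≠ y m} = {n}
  symm := by
    constructor
    rintro x y ⟨n, hn⟩
    refine ⟨n, ?_⟩
    rw [show {m | y m ≠ x m} = {m | x m ≠ y m} from by ext m; exact ne_comm, hn]
  loopless := by
    constructor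
    rintro x ⟨n, hn⟩
    have : n ∈ ({n} : Set ℕ) := rfl
    rw [← hn] at this
    exact this rfl

open Filter

theorem SimpleGraph.exists_isWellOrder_finite_lt_adj {V : Type*} (G : SimpleGraph V) (f : V → ℕ)
    (hf : ∀ x, {y | G.Adj y x ∧ f y ≤ f x}.Finite) :
    ∃ r : V → V → Prop, IsWellOrder V r ∧ ∀ x, {y | r y x ∧ G.Adj y x}.Finite := by
  let e : V ↪ ℕ × V := ⟨fun x => (f x, x), fun _ _ h => congrArg Prod.snd h⟩
  refine ⟨e ⁻¹'o Prod.Lex (· < ·) WellOrderingRel,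
    (RelEmbedding.preimage e _).isWellOrder, fun x => (hf x).subset ?_⟩
  rintro y ⟨hyx, hadj⟩
  refine ⟨hadj, ?_⟩
  rcases Prod.lex_def.mp hyx with hlt | ⟨heq, -⟩
  · exact hlt.le
  · exact heq.le

theorem Set.Finite.setOf_forall_ne_imp_eq {ι β : Type*} [Finite β] {S : Set ι} (hS : S.Finite)
    (x : ι → β) : {y : ι → β | ∃ k ∈ S, ∀ i ≠ k, y i = x i}.Finite := by
  classical
  refine ((hS.prod Set.finite_univ).image fun p : ι × β => Function.update x p.1 p.2).subset ?_
  rintro y ⟨k, hk, hy⟩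
  exact ⟨(k, y k), ⟨hk, trivial⟩, (Function.eq_update_iff.mpr ⟨rfl, hy⟩).symm⟩

section Defect

variable {ι β : Type*}

noncomputable def cofiniteRep (x : ι → β) : ι → β :=
  Quotient.out (x : Germ cofinite β)

def cofiniteDefect (x : ι → β) : Set ι := {i | x i ≠ cofiniteRep x i}

theorem cofiniteDefect_finite (x : ι → β) : (cofiniteDefect x).Finite := by
  have h : cofiniteRep x =ᶠ[cofinite] x := Quotient.mk_out (s := germSetoid cofinite β) x
  simpa only [cofiniteDefect, ne_comm] using eventually_cofinite.mp h

theorem cofiniteRep_eq_of_eventuallyEq {x y : ι → β} (h : x =ᶠ[cofinite] y) :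
    cofiniteRep x = cofiniteRep y :=
  congrArg Quotient.out (Germ.coe_eq.mpr h)

theorem ncard_cofiniteDefect_lt {x y : ι → β} {k : ι} (hy : ∀ i ≠ k, y i = x i) (hk : y k ≠ x k)
    (hkx : k ∉ cofiniteDefect x) : (cofiniteDefect x).ncard < (cofiniteDefect y).ncard := by
  have hrep : cofiniteRep y = cofiniteRep x :=
    cofiniteRep_eq_of_eventuallyEq <| eventually_cofinite.mpr <|
      (Set.finite_singleton k).subset fun i hi => of_not_not fun hik => hi (hy i hik)
  have hky : k ∈ cofiniteDefect y := by
    simpa only [cofiniteDefect, Set.mem_ofPred_eq, hrep, ← not_not.mp hkx] using hk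
  refine Set.ncard_lt_ncard ⟨fun i hi => ?_, fun hsub => hkx (hsub hky)⟩ (cofiniteDefect_finite y)
  have hik : i ≠ k := fun h => hkx (h ▸ hi)
  simpa only [cofiniteDefect, Set.mem_ofPred_eq, hy i hik, hrep] using hi

end Defect

theorem hammingGraph_adj_iff {x y : ℕ → Bool} :
    hammingGraph.Adj x y ↔ ∃ k, x k ≠ y k ∧ ∀ i ≠ k, x i = y i := by
  simp only [hammingGraph, Set.eq_singleton_iff_unique_mem, Set.mem_ofPred_eq]
  refine exists_congr fun k => and_congr_right fun _ => forall_congr' fun i => ?_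
  rw [not_imp_comm]

/-- The Hamming graph on `ℕ → Bool` has countable colouring number: there is a
well-order on `ℕ → Bool` such that every vertex has only finitely many neighbours
strictly below it. -/
theorem hammingGraph_countable_colouring_number :
    ∃ r : (ℕ → Bool) → (ℕ → Bool) → Prop,
      IsWellOrder (ℕ → Bool) r ∧
      ∀ x : ℕ → Bool, {y : ℕ → Bool | r y x ∧ hammingGraph.Adj y x}.Finite := by
  refine hammingGraph.exists_isWellOrder_finite_lt_adj (fun x => (cofiniteDefect x).ncard)
    fun x => ((cofiniteDefect_finite x).setOf_forall_ne_imp_eq x).subset ?_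
  rintro y ⟨hadj, hle⟩
  obtain ⟨k, hk, hy⟩ := hammingGraph_adj_iff.mp hadj
  refine ⟨k, ?_, hy⟩
  by_contra hkx
  exact (ncard_cofiniteDefect_lt hy hk hkx).not_ge hle
end

section
/- A partial 2-colouring of a bipartite graph satisfying the walk-parity compatibility condition extends to a total proper 2-colouring. Precisely: let G be a simple graph on a type X that admits a proper 2-colouring, let s ⊆ X be a set and p : X → Bool a function such that for all x, y ∈ s and every walk w in G from x to y, the length of w is even if and only if p x = p y. Then there exists a proper 2-colouring d : X → Bool of G (i.e., d x ≠ d y whenever G.Adj x y) with d x = p x for all x ∈ s. -/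
/-!
Start from any proper 2-colouring `c`. Along a walk from `a` to `x`, the parity of the length
decides both whether `c a = c x` and (by compatibility, for `a x ∈ s`) whether `p a = p x`;
hence `c xor p` is constant on the part of `s` in each connected component. Flipping `c` on
exactly those components where this constant is `true` gives a proper colouring agreeing with `p`.
-/

theorem Bool.xor_eq_xor_of_eq_iff_eq {a b c d : Bool} (h : a = b ↔ c = d) :
    (a ^^ c) = (b ^^ d) := by
  decide +revert

namespace SimpleGraph

variable {X : Type*} {G : SimpleGraph X}

theorem Coloring.even_length_iff_eq (c : G.Coloring Bool) {u v : X} (w : G.Walk u v) :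
    Even w.length ↔ c u = c v := by
  rw [c.even_length_iff_congr w, Bool.coe_iff_coe]

def Coloring.flipOn (c : G.Coloring Bool) (t : G.ConnectedComponent → Bool) :
    G.Coloring Bool :=
  Coloring.mk (fun x => c x ^^ t (G.connectedComponentMk x)) fun h => by
    rw [ConnectedComponent.eq.mpr h.reachable, Ne, Bool.xor_left_inj]
    exact c.valid h

theorem Coloring.flipOn_apply (c : G.Coloring Bool) (t : G.ConnectedComponent → Bool) (x : X) :
    c.flipOn t x = (c x ^^ t (G.connectedComponentMk x)) :=
  rfl

theorem Coloring.xor_eq_xor_of_reachable (c : G.Coloring Bool) {s : Set X} {p : X → Bool}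
    (hcompat : ∀ x ∈ s, ∀ y ∈ s, ∀ w : G.Walk x y, (Even w.length ↔ p x = p y))
    {a x : X} (ha : a ∈ s) (hx : x ∈ s) (hax : G.Reachable a x) :
    (c a ^^ p a) = (c x ^^ p x) := by
  obtain ⟨w⟩ := hax
  exact Bool.xor_eq_xor_of_eq_iff_eq ((c.even_length_iff_eq w).symm.trans (hcompat a ha x hx w))

open Classical in
theorem Coloring.exists_eqOn_of_compatible (c : G.Coloring Bool) {s : Set X} {p : X → Bool}
    (hcompat : ∀ x ∈ s, ∀ y ∈ s, ∀ w : G.Walk x y, (Even w.length ↔ p x = p y)) :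
    ∃ d : G.Coloring Bool, ∀ x ∈ s, d x = p x := by
  let t : G.ConnectedComponent → Bool := fun K =>
    decide (∃ a ∈ s, G.connectedComponentMk a = K ∧ (c a ^^ p a) = true)
  have ht : ∀ x ∈ s, t (G.connectedComponentMk x) = (c x ^^ p x) := by
    intro x hx
    cases hcx : c x ^^ p x
    · simp only [t, decide_eq_false_iff_not, not_exists, not_and]
      intro a ha hax
      rw [c.xor_eq_xor_of_reachable hcompat ha hx (ConnectedComponent.eq.mp hax), hcx]
      decide
    · exact decide_eq_true ⟨x, hx, rfl, hcx⟩
  refine ⟨c.flipOn t, fun x hx => ?_⟩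
  rw [c.flipOn_apply, ht x hx, ← Bool.xor_assoc, Bool.xor_self, Bool.false_xor]

end SimpleGraph

/-- A partial 2-colouring of a bipartite graph satisfying the walk-parity
compatibility condition extends to a total proper 2-colouring. -/
theorem partial_two_colouring_extends {X : Type*} (G : SimpleGraph X)
    (hbip : ∃ c : X → Bool, ∀ x y : X, G.Adj x y → c x ≠ c y)
    (s : Set X) (p : X → Bool)
    (hcompat : ∀ x ∈ s, ∀ y ∈ s, ∀ w : G.Walk x y, (Even w.length ↔ p x = p y)) :
    ∃ d : X → Bool, (∀ x y : X, G.Adj x y → d x ≠ d y) ∧ ∀ x ∈ s, d x = p x := by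
  obtain ⟨c, hc⟩ := hbip
  obtain ⟨d, hd⟩ := (SimpleGraph.Coloring.mk c (hc _ _)).exists_eqOn_of_compatible hcompat
  exact ⟨d, fun _ _ h => d.valid h, hd⟩
end

section
/- If a simple graph G on X has countable colouring number, then for every countable set A ⊆ X, the set of vertices of X that are adjacent to infinitely many elements of A is countable. -/
/-!
Fix a well-order `r` in which every vertex has only finitely many neighbours below it. If `x` is
adjacent to infinitely many `a ∈ A`, then it is adjacent to some `a ∈ A` that is not among its
finitely many lower neighbours; by trichotomy `x` lies below `a`, i.e. in the finite lower
neighbourhood of `a`. So these vertices lie in a countable union of finite sets.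
-/

namespace SimpleGraph

variable {X : Type*} (G : SimpleGraph X) (r : X → X → Prop)

theorem exists_adj_above_of_infinite_adj [Std.Trichotomous r]
    (hfin : ∀ v : X, {u : X | r u v ∧ G.Adj u v}.Finite) {A : Set X} {x : X}
    (hx : {a ∈ A | G.Adj x a}.Infinite) : ∃ a ∈ A, r x a ∧ G.Adj x a := by
  obtain ⟨a, ⟨haA, hadj⟩, hnot_below⟩ := (hx.sdiff (hfin x)).nonempty
  refine ⟨a, haA, ?_, hadj⟩
  rcases trichotomous_of r x a with hxa | rfl | hax
  · exact hxa
  · exact absurd hadj (G.irrefl)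
  · exact absurd ⟨hax, hadj.symm⟩ hnot_below

theorem infinitely_adjacent_subset_biUnion [Std.Trichotomous r]
    (hfin : ∀ v : X, {u : X | r u v ∧ G.Adj u v}.Finite) (A : Set X) :
    {x : X | {a ∈ A | G.Adj x a}.Infinite} ⊆ ⋃ a ∈ A, {u : X | r u a ∧ G.Adj u a} := by
  intro x hx
  obtain ⟨a, haA, hxa, hadj⟩ := G.exists_adj_above_of_infinite_adj r hfin hx
  exact Set.mem_biUnion haA ⟨hxa, hadj⟩

end SimpleGraph

/-- If a simple graph `G` on `X` has countable colouring number, then for every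
countable set `A ⊆ X` the set of vertices adjacent to infinitely many elements of
`A` is countable. -/
theorem countable_infinitely_adjacent_of_countable_colouring_number
    {X : Type*} (G : SimpleGraph X)
    (h : ∃ r : X → X → Prop, IsWellOrder X r ∧
        ∀ v : X, {u : X | r u v ∧ G.Adj u v}.Finite)
    (A : Set X) (hA : A.Countable) :
    {x : X | {a ∈ A | G.Adj x a}.Infinite}.Countable := by
  obtain ⟨r, _, hfin⟩ := h
  exact (hA.biUnion fun a _ => (hfin a).countable).mono
    (G.infinitely_adjacent_subset_biUnion r hfin A)
end
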